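/- ∑_{k=1}^∞ (729/784)^k / (k · C(3k,k)) = (12√3/13)·arctan(√3/5) − (3/13)·log(16/7). -/

import Mathlib

/-!
Euler's Beta integral gives `1 / (k C(3k,k)) = ∫₀¹ t^(k-1) (1-t)^(2k) dt`, so for `|x| < 27/4`
(where `t (1-t)² ≤ 4/27` makes the geometric series converge uniformly) the series equals
`∫₀¹ x (1-t)² / (1 - x t (1-t)²) dt`. At `x = 729/784` the cubic `784 - 729 t (1-t)²` factors
as `(16 - 9t)(81t² - 18t + 49)`, and partial fractions give an elementary primitive whose values
at `0` and `1` combine, through `arctan (2/√3) + arctan (1/(4√3)) = 3 arctan (√3/5)`, into the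
closed form.
-/

open Real
open scoped Nat

theorem succ_mul_choose_mul_factorial_eq_ascFactorial (a b : ℕ) :
    (a + 1) * (a + b + 1).choose (a + 1) * b ! = (a + 1).ascFactorial (b + 1) := by
  refine Nat.eq_of_mul_eq_mul_left (Nat.factorial_pos a) ?_
  rw [Nat.factorial_mul_ascFactorial, show a + (b + 1) = b + (a + 1) by ring,
    ← Nat.add_choose_mul_factorial_mul_factorial b (a + 1), Nat.factorial_succ,
    show b + (a + 1) = a + b + 1 by ring]
  ring

theorem integral_pow_mul_one_sub_pow (a b : ℕ) :
    ∫ t in (0 : ℝ)..1, t ^ a * (1 - t) ^ b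
      = ((a + 1 : ℝ) * (a + b + 1).choose (a + 1))⁻¹ := by
  have hβ :=
    Complex.betaIntegral_eval_nat_add_one_right (u := (a : ℂ) + 1) (by simp; positivity) b
  have hint : Complex.betaIntegral ((a : ℂ) + 1) ((b : ℂ) + 1)
      = ((∫ t in (0 : ℝ)..1, t ^ a * (1 - t) ^ b : ℝ) : ℂ) := by
    rw [Complex.betaIntegral, ← intervalIntegral.integral_ofReal]
    simp only [add_sub_cancel_right, Complex.cpow_natCast]
    push_cast
    rfl
  have hprod :
      ∏ j ∈ Finset.range (b + 1), ((a : ℂ) + 1 + j) = ((a + 1).ascFactorial (b + 1) : ℂ) := by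
    rw [Nat.ascFactorial_eq_prod_range]
    push_cast
    ring_nf
  rw [hint, hprod, ← succ_mul_choose_mul_factorial_eq_ascFactorial] at hβ
  apply Complex.ofReal_injective
  rw [hβ]
  push_cast
  have : (b ! : ℂ) ≠ 0 := by exact_mod_cast (Nat.factorial_pos b).ne'
  field_simp

-- `4/27 - t (1 - t)^2 = (1 - 3t)^2 (4 - 3t) / 27`
theorem mul_one_sub_sq_le {t : ℝ} (ht : t ≤ 4 / 3) : t * (1 - t) ^ 2 ≤ 4 / 27 := by
  nlinarith [mul_nonneg (sq_nonneg (1 - 3 * t)) (by linarith : (0 : ℝ) ≤ 4 - 3 * t)]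

theorem abs_mul_one_sub_sq_le {t : ℝ} (h0 : 0 ≤ t) (h1 : t ≤ 1) :
    |t * (1 - t) ^ 2| ≤ 4 / 27 := by
  rw [abs_of_nonneg (by positivity)]
  exact mul_one_sub_sq_le (by linarith)

theorem hasSum_pow_div_mul_choose {x : ℝ} (hx : |x| < 27 / 4) :
    HasSum (fun k : ℕ => x ^ (k + 1) / ((k + 1) * (3 * (k + 1)).choose (k + 1)))
      (∫ t in (0 : ℝ)..1, x * (1 - t) ^ 2 / (1 - x * (t * (1 - t) ^ 2))) := by
  have hterm (k : ℕ) : x ^ (k + 1) / ((k + 1) * (3 * (k + 1)).choose (k + 1))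
      = ∫ t in (0 : ℝ)..1, x ^ (k + 1) * (t ^ k * (1 - t) ^ (2 * (k + 1))) := by
    rw [intervalIntegral.integral_const_mul, integral_pow_mul_one_sub_pow,
      show k + 2 * (k + 1) + 1 = 3 * (k + 1) by ring, div_eq_mul_inv]
  simp only [hterm]
  have hq : |x| * (4 / 27) < 1 := by linarith
  refine intervalIntegral.hasSum_integral_of_dominated_convergence
    (fun k _ => |x| ^ (k + 1) * (4 / 27) ^ k) (fun k => by fun_prop) (fun k => ?_)
    (.of_forall fun _ _ => ?_) intervalIntegrable_const (.of_forall fun t ht => ?_)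
  · refine .of_forall fun t ht => ?_
    rw [Set.uIoc_of_le zero_le_one] at ht
    have hs := abs_mul_one_sub_sq_le ht.1.le ht.2
    have h1t : |1 - t| ^ 2 ≤ 1 := by
      rw [abs_of_nonneg (by linarith [ht.2])]; nlinarith [ht.1, ht.2]
    calc ‖x ^ (k + 1) * (t ^ k * (1 - t) ^ (2 * (k + 1)))‖
        = |x| ^ (k + 1) * (|t * (1 - t) ^ 2| ^ k * |1 - t| ^ 2) := by
          rw [Real.norm_eq_abs]; simp only [abs_mul, abs_pow]; ring
      _ ≤ |x| ^ (k + 1) * ((4 / 27) ^ k * 1) := by gcongr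
      _ = |x| ^ (k + 1) * (4 / 27) ^ k := by ring
  · simpa [pow_succ, mul_pow, mul_comm, mul_left_comm, mul_assoc] using
      ((summable_geometric_of_lt_one (by positivity) hq).mul_left |x|)
  · rw [Set.uIoc_of_le zero_le_one] at ht
    have hr : |x * (t * (1 - t) ^ 2)| < 1 := by
      rw [abs_mul]
      calc |x| * |t * (1 - t) ^ 2| ≤ |x| * (4 / 27) := by
            gcongr; exact abs_mul_one_sub_sq_le ht.1.le ht.2
        _ < 1 := hq
    have hk (k : ℕ) : x ^ (k + 1) * (t ^ k * (1 - t) ^ (2 * (k + 1)))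
        = x * (1 - t) ^ 2 * (x * (t * (1 - t) ^ 2)) ^ k := by
      rw [mul_pow, mul_pow, ← pow_mul]; ring
    simpa only [hk, div_eq_mul_inv] using
      (hasSum_geometric_of_abs_lt_one hr).mul_left (x * (1 - t) ^ 2)

theorem arctan_two_mul_sqrt_three_div_three_add_arctan_sqrt_three_div_twelve :
    arctan (2 * √3 / 3) + arctan (√3 / 12) = 3 * arctan (√3 / 5) := by
  have hs : √3 ^ 2 = 3 := sq_sqrt (by norm_num)
  have hadd {x y z : ℝ} (hxy : x * y < 1) (hz : (x + y) / (1 - x * y) = z) :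
      arctan x + arctan y = arctan z := by rw [arctan_add hxy, hz]
  have h1 : arctan (2 * √3 / 3) + arctan (√3 / 12) = arctan (9 * √3 / 10) :=
    hadd (by nlinarith) (by rw [div_eq_iff (by nlinarith)]; linear_combination √3 / 20 * hs)
  have h2 : arctan (√3 / 5) + arctan (√3 / 5) = arctan (5 * √3 / 11) :=
    hadd (by nlinarith) (by rw [div_eq_iff (by nlinarith)]; linear_combination √3 / 55 * hs)
  have h3 : arctan (5 * √3 / 11) + arctan (√3 / 5) = arctan (9 * √3 / 10) :=
    hadd (by nlinarith) (by rw [div_eq_iff (by nlinarith)]; linear_combination 9 * √3 / 110 * hs)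
  linarith

theorem one_sub_mul_mul_one_sub_sq (t : ℝ) :
    1 - 729 / 784 * (t * (1 - t) ^ 2) = (16 - 9 * t) * (81 * t ^ 2 - 18 * t + 49) / 784 := by
  ring

theorem quadratic_pos (t : ℝ) : 0 < 81 * t ^ 2 - 18 * t + 49 := by
  nlinarith [sq_nonneg (9 * t - 1)]

noncomputable def integrandPrimitive (t : ℝ) : ℝ :=
  -(7 / 39) * log (16 - 9 * t) - 16 / 39 * log (81 * t ^ 2 - 18 * t + 49)
    + 4 * √3 / 13 * arctan ((9 * t - 1) / (4 * √3))

theorem hasDerivAt_integrandPrimitive {t : ℝ} (ht : t < 16 / 9) :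
    HasDerivAt integrandPrimitive
      (729 / 784 * (1 - t) ^ 2 / (1 - 729 / 784 * (t * (1 - t) ^ 2))) t := by
  have hl : 0 < 16 - 9 * t := by linarith
  have hq := quadratic_pos t
  have hs : √3 ^ 2 = 3 := sq_sqrt (by norm_num)
  have hlin : HasDerivAt (fun u => 16 - 9 * u) (-9) t := by
    simpa using ((hasDerivAt_id t).const_mul 9).const_sub 16
  have hquad : HasDerivAt (fun u => 81 * u ^ 2 - 18 * u + 49) (162 * t - 18) t := by
    refine ((((hasDerivAt_pow 2 t).const_mul 81).sub
      ((hasDerivAt_id t).const_mul 18)).add_const 49).congr_deriv ?_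
    simp only [Nat.cast_ofNat, Nat.add_one_sub_one, pow_one, mul_one, sub_left_inj]; ring
  have harg : HasDerivAt (fun u => (9 * u - 1) / (4 * √3)) (9 / (4 * √3)) t := by
    simpa using (((hasDerivAt_id t).const_mul 9).sub_const 1).div_const (4 * √3)
  refine ((((hlin.log hl.ne').const_mul (-(7 / 39))).sub
    ((hquad.log hq.ne').const_mul (16 / 39))).add
      (harg.arctan.const_mul (4 * √3 / 13))).congr_deriv ?_
  have hsq : 1 + ((9 * t - 1) / (4 * √3)) ^ 2 = (81 * t ^ 2 - 18 * t + 49) / 48 := by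
    rw [div_pow, mul_pow, hs]; ring
  rw [one_sub_mul_mul_one_sub_sq, hsq]
  generalize hQ : 81 * t ^ 2 - 18 * t + 49 = Q at hq ⊢
  field_simp
  rw [← hQ]
  ring

theorem integral_integrand_eq :
    ∫ t in (0 : ℝ)..1, 729 / 784 * (1 - t) ^ 2 / (1 - 729 / 784 * (t * (1 - t) ^ 2))
      = 12 * √3 / 13 * arctan (√3 / 5) - 3 / 13 * log (16 / 7) := by
  have hderiv (t : ℝ) (ht : t ∈ Set.uIcc (0 : ℝ) 1) := by
    rw [Set.uIcc_of_le zero_le_one] at ht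
    exact hasDerivAt_integrandPrimitive (t := t) (by linarith [ht.2])
  have hden (t : ℝ) (ht : t < 16 / 9) : 1 - 729 / 784 * (t * (1 - t) ^ 2) ≠ 0 := by
    rw [one_sub_mul_mul_one_sub_sq]
    have := quadratic_pos t
    have : 0 < 16 - 9 * t := by linarith
    positivity
  rw [intervalIntegral.integral_eq_sub_of_hasDerivAt hderiv]
  · have hs : √3 ^ 2 = 3 := sq_sqrt (by norm_num)
    have e1 : 8 / (4 * √3) = 2 * √3 / 3 := by
      rw [div_eq_div_iff (by positivity) (by norm_num)]; linear_combination -8 * hs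
    have e2 : -1 / (4 * √3) = -(√3 / 12) := by
      rw [div_eq_iff (by positivity)]; linear_combination hs / 3
    have l112 : log 112 = log 16 + log 7 := by
      rw [← log_mul (by norm_num) (by norm_num)]; norm_num
    have l49 : log 49 = 2 * log 7 := by
      rw [← log_rpow (by norm_num)]; norm_num
    norm_num [integrandPrimitive, e1, e2, l112, l49, log_div, arctan_neg]
    linear_combination 4 * √3 / 13 *
      arctan_two_mul_sqrt_three_div_three_add_arctan_sqrt_three_div_twelve
  · refine ContinuousOn.intervalIntegrable (ContinuousOn.div (by fun_prop) (by fun_prop) ?_)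
    intro t ht
    rw [Set.uIcc_of_le zero_le_one] at ht
    exact hden t (by linarith [ht.2])

theorem stmt_10 :
    ∑' k : ℕ, (729/784 : ℝ)^(k+1) / ((((k:ℝ)+1)) * (((3*(k+1)).choose (k+1) : ℕ) : ℝ)) =
    (12*Real.sqrt 3/13)*Real.arctan (Real.sqrt 3/5) - (3/13)*Real.log (16/7) := by
  rw [(hasSum_pow_div_mul_choose (x := 729 / 784) (by norm_num [abs_of_pos])).tsum_eq]
  exact integral_integrand_eq
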